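/- Let $H \in C^1(\mathbb{R})$ be convex. Let $h \in W^{1,1}(0,T)$ be nonnegative and nonincreasing, $u_0 \in \mathbb{R}$, and $u \in L^\infty(0,T)$. Suppose $H(u)$, $H'(u)u$, $H'(u)(\dot h * u)$ are in $L^1(0,T)$. Then for a.e. $t \in (0,T)$: $H'(u(t)) \frac{d}{dt}\big(h * [u(\cdot) - u_0]\big)(t) \ge \frac{d}{dt}\big(h * [H(u(\cdot)) - H(u_0)]\big)(t)$. -/

import Mathlib

open Set MeasureTheory Filter Topology Metric

namespace Stmt17Aux

/-- a.e. fundamental theorem of calculus (Lebesgue differentiation theorem). -/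
lemma ae_ftc (f : ℝ → ℝ) (hf : Integrable f) :
    ∀ᵐ x : ℝ, HasDerivAt (fun t : ℝ => ∫ s in (0:ℝ)..t, f s) (f x) x := by
  filter_upwards [IsUnifLocDoublingMeasure.ae_tendsto_average_norm_sub volume
    hf.locallyIntegrable 1] with x hx
  set A : ℝ → ℝ := fun y => ⨍ z in closedBall x |y - x|, ‖f z - f x‖ with hA
  have hδ : Tendsto (fun y : ℝ => |y - x|) (𝓝[≠] x) (𝓝[>] 0) := by
    apply tendsto_nhdsWithin_of_tendsto_nhds_of_eventually_within
    · have h1 : Tendsto (fun y : ℝ => |y - x|) (𝓝 x) (𝓝 |x - x|) :=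
        ((continuous_id.sub continuous_const).abs).tendsto x
      simpa using h1.mono_left nhdsWithin_le_nhds
    · filter_upwards [self_mem_nhdsWithin] with y hy
      exact abs_pos.2 (sub_ne_zero.2 hy)
  have havg : Tendsto A (𝓝[≠] x) (𝓝 0) :=
    hx (fun _ => x) (fun y => |y - x|) hδ (Eventually.of_forall fun y => by
      simpa using mem_closedBall_self (abs_nonneg (y - x)))
  rw [hasDerivAt_iff_tendsto_slope]
  have hbound : ∀ᶠ y in (𝓝[≠] x),
      ‖slope (fun t : ℝ => ∫ s in (0:ℝ)..t, f s) x y - f x‖ ≤ 2 * A y := by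
    filter_upwards [self_mem_nhdsWithin] with y hy
    have hy' : y ≠ x := hy
    have hr : 0 < |y - x| := abs_pos.2 (sub_ne_zero.2 hy')
    have hFsub : (∫ s in (0:ℝ)..y, f s) - ∫ s in (0:ℝ)..x, f s = ∫ s in x..y, f s :=
      intervalIntegral.integral_interval_sub_left hf.intervalIntegrable hf.intervalIntegrable
    have hsl : slope (fun t : ℝ => ∫ s in (0:ℝ)..t, f s) x y - f x
        = (∫ s in x..y, (f s - f x)) / (y - x) := by
      rw [slope_def_field, hFsub,
        intervalIntegral.integral_sub hf.intervalIntegrable intervalIntegrable_const,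
        intervalIntegral.integral_const, smul_eq_mul]
      have : y - x ≠ 0 := sub_ne_zero.2 hy'
      field_simp
    have hsubset : Set.uIoc x y ⊆ closedBall x |y - x| := by
      intro z hz
      rw [mem_closedBall, Real.dist_eq]
      rcases le_total x y with hxy | hxy
      · rw [uIoc_of_le hxy] at hz
        rw [abs_of_nonneg (sub_nonneg.2 hxy), abs_le]
        exact ⟨by linarith [hz.1, hz.2], by linarith [hz.1, hz.2]⟩
      · rw [uIoc_of_ge hxy] at hz
        rw [abs_of_nonpos (sub_nonpos.2 hxy), abs_le]
        exact ⟨by linarith [hz.1, hz.2], by linarith [hz.1, hz.2]⟩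
    have hint : IntegrableOn (fun z => ‖f z - f x‖) (closedBall x |y - x|) volume :=
      ((hf.integrableOn.sub (integrableOn_const measure_closedBall_lt_top.ne)).norm)
    have h1 : ‖∫ s in x..y, (f s - f x)‖ ≤ ∫ z in closedBall x |y - x|, ‖f z - f x‖ := by
      refine (intervalIntegral.norm_integral_le_integral_norm_uIoc).trans ?_
      exact setIntegral_mono_set hint (Eventually.of_forall fun z => norm_nonneg _)
        (HasSubset.Subset.eventuallyLE hsubset)
    have hμ : (volume (closedBall x |y - x|)).toReal = 2 * |y - x| := by
      rw [Real.volume_closedBall, ENNReal.toReal_ofReal (by positivity)]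
    have h2 : ∫ z in closedBall x |y - x|, ‖f z - f x‖ = (2 * |y - x|) * A y := by
      simp only [hA]
      rw [setAverage_eq, measureReal_def, hμ, smul_eq_mul, ← mul_assoc, mul_inv_cancel₀ (by positivity), one_mul]
    rw [hsl]
    calc ‖(∫ s in x..y, (f s - f x)) / (y - x)‖
        = ‖∫ s in x..y, (f s - f x)‖ / |y - x| := by
          rw [norm_div, Real.norm_eq_abs (y - x)]
      _ ≤ ((2 * |y - x|) * A y) / |y - x| := by
          gcongr
          exact h1.trans_eq h2
      _ = 2 * A y := by field_simp
  have hnn : ∀ᶠ y in 𝓝[≠] x,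
      0 ≤ ‖slope (fun t : ℝ => ∫ s in (0:ℝ)..t, f s) x y - f x‖ :=
    Eventually.of_forall fun _ => norm_nonneg _
  have hsq := squeeze_zero' hnn hbound (by simpa using havg.const_mul 2)
  exact tendsto_iff_norm_sub_tendsto_zero.2 hsq


lemma convex_tangent {H : ℝ → ℝ} (hH : ConvexOn ℝ univ H) (hd : Differentiable ℝ H)
    (x y : ℝ) : deriv H x * (y - x) ≤ H y - H x := by
  rcases lt_trichotomy x y with hxy | rfl | hyx
  · have hs := hH.deriv_le_slope (mem_univ x) (mem_univ y) hxy (hd x)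
    rw [slope_def_field, le_div_iff₀ (sub_pos.2 hxy)] at hs
    linarith
  · simp
  · have hs := hH.slope_le_deriv (mem_univ y) (mem_univ x) hyx (hd x)
    rw [slope_def_field, div_le_iff₀ (sub_pos.2 hyx)] at hs
    linarith


section ConvRep

open scoped Convolution
open ContinuousLinearMap

variable {T : ℝ} {h h' : ℝ → ℝ}

lemma primitive_indicator_eq (hh_W11 : ∀ t ∈ Icc (0:ℝ) T, h t = h 0 + ∫ s in (0:ℝ)..t, h' s)
    {x : ℝ} (hx : x ∈ Icc (0:ℝ) T) :
    (∫ s in (0:ℝ)..x, (Ioc (0:ℝ) T).indicator h' s) = h x - h 0 := by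
  have h1 : (∫ s in (0:ℝ)..x, (Ioc (0:ℝ) T).indicator h' s) = ∫ s in (0:ℝ)..x, h' s := by
    rw [intervalIntegral.integral_of_le hx.1, intervalIntegral.integral_of_le hx.1,
      setIntegral_indicator measurableSet_Ioc,
      inter_eq_self_of_subset_left (Ioc_subset_Ioc_right hx.2)]
  rw [h1, hh_W11 x hx]
  ring

lemma conv_rep (hT : 0 < T)
    (hh'_int : IntegrableOn h' (Ioc 0 T))
    (hh_W11 : ∀ t ∈ Icc (0:ℝ) T, h t = h 0 + ∫ s in (0:ℝ)..t, h' s)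
    (v : ℝ → ℝ) (hv_meas : Measurable v) (C : ℝ) (hv_bdd : ∀ x, |v x| ≤ C)
    (hv_supp : ∀ x, x ∉ Ioc (0:ℝ) T → v x = 0) :
    ∀ᵐ t ∂(volume.restrict (Ioo 0 T)),
      HasDerivAt (fun s : ℝ => ∫ τ in (0:ℝ)..s, h (s - τ) * v τ)
        (h 0 * v t + ∫ τ in (0:ℝ)..t, h' (t - τ) * v τ) t := by
  set f : ℝ → ℝ := indicator (Ioc 0 T) h' with hf_def
  have hf : Integrable f := by
    rw [hf_def, integrable_indicator_iff measurableSet_Ioc]; exact hh'_int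
  have hv_int : Integrable v := by
    have hveq : v = indicator (Ioc 0 T) v := by
      ext x; by_cases hx : x ∈ Ioc (0:ℝ) T
      · simp [hx]
      · simp [hx, hv_supp x hx]
    rw [hveq, integrable_indicator_iff measurableSet_Ioc]
    exact Measure.integrableOn_of_bounded (by simp) hv_meas.aestronglyMeasurable
      (ae_of_all _ fun a => by simpa [Real.norm_eq_abs] using hv_bdd a)
  set g : ℝ → ℝ := f ⋆[mul ℝ ℝ] v with hg_def
  have hg : Integrable g := hf.integrable_convolution _ hv_int
  set ψ : ℝ → ℝ := fun x => ∫ s in (0:ℝ)..x, f s with hψ_def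
  have hψc : Continuous ψ := hf.continuous_primitive 0
  have hψ0 : ∀ x ≤ (0:ℝ), ψ x = 0 := by
    intro x hx
    have hz : ∀ s ∈ uIcc (0:ℝ) x, f s = 0 := by
      intro s hs
      rw [uIcc_of_ge hx] at hs
      exact indicator_of_notMem (fun hmem => absurd hmem.1 (not_lt.2 hs.2)) _
    calc ψ x = ∫ s in (0:ℝ)..x, (0:ℝ) := intervalIntegral.integral_congr hz
    _ = 0 := intervalIntegral.integral_zero
  have hψh : ∀ x ∈ Icc (0:ℝ) T, ψ x = h x - h 0 := fun x hx =>
    primitive_indicator_eq hh_W11 hx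
  filter_upwards [ae_restrict_of_ae (ae_ftc v hv_int), ae_restrict_of_ae (ae_ftc g hg),
    ae_restrict_mem measurableSet_Ioo] with t hdv hdg ht
  have hΦ : HasDerivAt (fun s : ℝ => h 0 * (∫ τ in (0:ℝ)..s, v τ) + ∫ x in (0:ℝ)..s, g x)
      (h 0 * v t + g t) t := (hdv.const_mul (h 0)).add hdg
  -- value of g at t
  have hne : ∀ᵐ τ : ℝ ∂(volume.restrict (Ioc 0 t)), τ ≠ t := by
    refine ae_restrict_of_ae ?_
    rw [ae_iff]
    have : {τ : ℝ | ¬τ ≠ t} = {t} := by ext τ; simp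
    rw [this]
    exact measure_singleton t
  have hgt : g t = ∫ τ in (0:ℝ)..t, h' (t - τ) * v τ := by
    have h1 : g t = ∫ τ, f (t - τ) * v τ := convolution_mul_swap
    have h2 : (fun τ => f (t - τ) * v τ)
        = indicator (Ioc 0 t) (fun τ => f (t - τ) * v τ) := by
      ext τ
      by_cases hτ : τ ∈ Ioc (0:ℝ) t
      · rw [indicator_of_mem hτ]
      · rw [indicator_of_notMem hτ]
        rcases lt_or_ge t τ with h3 | h3
        · by_cases h4 : τ ∈ Ioc (0:ℝ) T
          · have : f (t - τ) = 0 :=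
              indicator_of_notMem (fun hmem => absurd hmem.1 (by linarith)) _
            rw [this, zero_mul]
          · rw [hv_supp τ h4, mul_zero]
        · have hτ0 : τ ≤ 0 := by
            by_contra h5
            exact hτ ⟨lt_of_not_ge h5, h3⟩
          have : τ ∉ Ioc (0:ℝ) T := fun hmem => absurd hmem.1 (not_lt.2 hτ0)
          rw [hv_supp τ this, mul_zero]
    rw [h1, h2, integral_indicator measurableSet_Ioc,
      intervalIntegral.integral_of_le ht.1.le]
    refine setIntegral_congr_ae measurableSet_Ioc ?_
    have := hne
    rw [ae_restrict_iff' measurableSet_Ioc] at this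
    filter_upwards [this] with τ hτne hτ
    have hmem : t - τ ∈ Ioc (0:ℝ) T :=
      ⟨sub_pos.2 (lt_of_le_of_ne hτ.2 (hτne hτ)), by linarith [hτ.1, ht.2]⟩
    rw [hf_def, indicator_of_mem hmem]
  -- equality of the two functions on Ioo 0 T
  have hA : ∀ s ∈ Ioo (0:ℝ) T, (∫ τ in (0:ℝ)..s, h (s - τ) * v τ)
      = h 0 * (∫ τ in (0:ℝ)..s, v τ) + ∫ x in (0:ℝ)..s, g x := by
    intro s hs
    set χ : ℝ → ℝ := indicator (Ioc 0 s) (fun _ => (1:ℝ)) with hχ_def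
    have hχ_meas : Measurable χ := measurable_const.indicator measurableSet_Ioc
    have hχ_int : Integrable χ := by
      rw [hχ_def, integrable_indicator_iff measurableSet_Ioc]
      exact integrableOn_const (by simp)
    have hstep1 : (χ ⋆[mul ℝ ℝ] g) s = ∫ x in (0:ℝ)..s, g x := by
      rw [convolution_mul]
      have heq : (fun τ => χ τ * g (s - τ)) = indicator (Ioc 0 s) (fun τ => g (s - τ)) := by
        ext τ; by_cases hτ : τ ∈ Ioc (0:ℝ) s <;> simp [hχ_def, hτ]
      rw [heq, integral_indicator measurableSet_Ioc,
        ← intervalIntegral.integral_of_le hs.1.le,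
        intervalIntegral.integral_comp_sub_left (fun x => g x) s]
      simp
    have hstep2 : ((χ ⋆[mul ℝ ℝ] f) ⋆[mul ℝ ℝ] v) s = (χ ⋆[mul ℝ ℝ] (f ⋆[mul ℝ ℝ] v)) s := by
      apply convolution_assoc (mul ℝ ℝ) (mul ℝ ℝ) (mul ℝ ℝ) (mul ℝ ℝ)
        (fun x y z => mul_assoc x y z)
        hχ_int.aestronglyMeasurable hf.aestronglyMeasurable hv_int.aestronglyMeasurable
        (hχ_int.ae_convolution_exists _ hf)
        (hf.norm.ae_convolution_exists _ hv_int.norm)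
      have hq : Integrable ((fun x => ‖f x‖) ⋆[mul ℝ ℝ] (fun x => ‖v x‖)) :=
        hf.norm.integrable_convolution _ hv_int.norm
      have hq2 : Integrable
          (fun τ => ((fun x => ‖f x‖) ⋆[mul ℝ ℝ] (fun x => ‖v x‖)) (s - τ)) :=
        (integrable_comp_sub_left _ s).2 hq
      refine hq2.bdd_mul (hχ_meas.norm.aestronglyMeasurable) (c := 1) (ae_of_all _ fun τ => ?_)
      rw [norm_norm, hχ_def]
      by_cases hτ : τ ∈ Ioc (0:ℝ) s <;> simp [hτ]
    have hstep3 : ∀ x : ℝ, x < s → (χ ⋆[mul ℝ ℝ] f) x = ψ x := by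
      intro x hx
      rw [convolution_mul]
      have heq : (fun τ => χ τ * f (x - τ)) = indicator (Ioc 0 s) (fun τ => f (x - τ)) := by
        ext τ; by_cases hτ : τ ∈ Ioc (0:ℝ) s <;> simp [hχ_def, hτ]
      rw [heq, integral_indicator measurableSet_Ioc,
        ← intervalIntegral.integral_of_le hs.1.le,
        intervalIntegral.integral_comp_sub_left f x]
      have hzero : ∫ r in (x - s)..(x - 0), f r
          = (∫ r in (x - s)..(0:ℝ), f r) + ∫ r in (0:ℝ)..(x - 0), f r :=
        (intervalIntegral.integral_add_adjacent_intervals hf.intervalIntegrable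
          hf.intervalIntegrable).symm
      have hz2 : (∫ r in (x - s)..(0:ℝ), f r) = 0 := by
        have hz3 : ∀ r ∈ uIcc (x - s) (0:ℝ), f r = 0 := by
          intro r hr
          rw [uIcc_of_le (by linarith : x - s ≤ 0)] at hr
          exact indicator_of_notMem (fun hmem => absurd hmem.1 (not_lt.2 hr.2)) _
        calc (∫ r in (x - s)..(0:ℝ), f r) = ∫ r in (x - s)..(0:ℝ), (0:ℝ) :=
              intervalIntegral.integral_congr hz3
        _ = 0 := intervalIntegral.integral_zero
      rw [hzero, hz2, zero_add, hψ_def]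
      simp
    have hstep4 : ((χ ⋆[mul ℝ ℝ] f) ⋆[mul ℝ ℝ] v) s = ∫ τ in (0:ℝ)..s, ψ (s - τ) * v τ := by
      rw [convolution_mul_swap]
      have heq : (fun τ => (χ ⋆[mul ℝ ℝ] f) (s - τ) * v τ)
          = indicator (Ioc 0 s) (fun τ => ψ (s - τ) * v τ) := by
        ext τ
        by_cases hτ : τ ∈ Ioc (0:ℝ) s
        · rw [indicator_of_mem hτ, hstep3 (s - τ) (by linarith [hτ.1])]
        · rw [indicator_of_notMem hτ]
          rcases lt_or_ge s τ with h3 | h3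
          · by_cases h4 : τ ∈ Ioc (0:ℝ) T
            · rw [hstep3 (s - τ) (by linarith [h4.1]), hψ0 (s - τ) (by linarith), zero_mul]
            · rw [hv_supp τ h4, mul_zero]
          · have hτ0 : τ ≤ 0 := by
              by_contra h5
              exact hτ ⟨lt_of_not_ge h5, h3⟩
            have h6 : τ ∉ Ioc (0:ℝ) T := fun hmem => absurd hmem.1 (not_lt.2 hτ0)
            rw [hv_supp τ h6, mul_zero]
      rw [heq, integral_indicator measurableSet_Ioc,
        ← intervalIntegral.integral_of_le hs.1.le]
    have hψ_bdd : ∀ x : ℝ, ‖ψ x‖ ≤ ∫ r, ‖f r‖ := by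
      intro x
      refine (intervalIntegral.norm_integral_le_integral_norm_uIoc).trans ?_
      exact setIntegral_le_integral hf.norm (ae_of_all _ fun r => norm_nonneg _)
    have hstep5 : (∫ τ in (0:ℝ)..s, ψ (s - τ) * v τ)
        = (∫ τ in (0:ℝ)..s, h (s - τ) * v τ) - h 0 * ∫ τ in (0:ℝ)..s, v τ := by
      have hψv_ii : IntervalIntegrable (fun τ => ψ (s - τ) * v τ) volume 0 s := by
        refine (hv_int.bdd_mul
          ((hψc.comp (continuous_const.sub continuous_id)).aestronglyMeasurable)
          (ae_of_all _ fun x => hψ_bdd (s - x))).intervalIntegrable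
      have hconst : IntervalIntegrable (fun τ => h 0 * v τ) volume 0 s :=
        (hv_int.const_mul (h 0)).intervalIntegrable
      have hcongr : ∀ τ ∈ uIcc (0:ℝ) s, h (s - τ) * v τ = ψ (s - τ) * v τ + h 0 * v τ := by
        intro τ hτ
        rw [uIcc_of_le hs.1.le] at hτ
        have hmem : s - τ ∈ Icc (0:ℝ) T :=
          ⟨sub_nonneg.2 hτ.2, by linarith [hτ.1, hs.2]⟩
        rw [hψh _ hmem]; ring
      rw [intervalIntegral.integral_congr hcongr,
        intervalIntegral.integral_add hψv_ii hconst,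
        intervalIntegral.integral_const_mul]
      ring
    have : (∫ τ in (0:ℝ)..s, h (s - τ) * v τ)
        = (∫ τ in (0:ℝ)..s, ψ (s - τ) * v τ) + h 0 * ∫ τ in (0:ℝ)..s, v τ := by
      rw [hstep5]; ring
    rw [this, ← hstep4, hstep2, hstep1, hg_def]
    ring
  have hev : (fun s : ℝ => ∫ τ in (0:ℝ)..s, h (s - τ) * v τ) =ᶠ[𝓝 t]
      (fun s : ℝ => h 0 * (∫ τ in (0:ℝ)..s, v τ) + ∫ x in (0:ℝ)..s, g x) := by
    filter_upwards [Ioo_mem_nhds ht.1 ht.2] with s hs using hA s hs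
  have hF := hΦ.congr_of_eventuallyEq hev
  rwa [hgt] at hF

end ConvRep

end Stmt17Aux


open Set MeasureTheory Stmt17Aux

theorem stmt17 (T : ℝ) (hT : 0 < T)
    (H : ℝ → ℝ) (hH_C1 : ContDiff ℝ 1 H) (hH_conv : ConvexOn ℝ univ H)
    (h h' : ℝ → ℝ)
    -- h ∈ W^{1,1}(0,T), nonnegative and nonincreasing
    (hh'_int : IntegrableOn h' (Ioc 0 T))
    (hh_W11 : ∀ t ∈ Icc (0:ℝ) T, h t = h 0 + ∫ s in (0:ℝ)..t, h' s)
    (hh_nonneg : ∀ t ∈ Icc (0:ℝ) T, 0 ≤ h t)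
    (hh_anti : AntitoneOn h (Icc 0 T))
    (u0 : ℝ) (u : ℝ → ℝ)
    -- u ∈ L^∞(0,T)
    (hu_meas : Measurable u) (hu_bdd : ∃ C, ∀ t ∈ Icc (0:ℝ) T, |u t| ≤ C)
    -- integrability assumptions
    (hHu : IntegrableOn (fun t => H (u t)) (Ioc 0 T))
    (hH'uu : IntegrableOn (fun t => deriv H (u t) * u t) (Ioc 0 T))
    (hH'uh'u : IntegrableOn
      (fun t => deriv H (u t) * ∫ τ in (0:ℝ)..t, h' (t - τ) * u τ) (Ioc 0 T)) :
    ∀ᵐ t ∂(volume.restrict (Ioo 0 T)),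
      deriv (fun s : ℝ => ∫ τ in (0:ℝ)..s, h (s - τ) * (H (u τ) - H u0)) t
        ≤ deriv H (u t) *
            deriv (fun s : ℝ => ∫ τ in (0:ℝ)..s, h (s - τ) * (u τ - u0)) t := by
  classical
  obtain ⟨C₀, hC₀⟩ := hu_bdd
  set C : ℝ := max C₀ 0 with hC_def
  have hC : ∀ t ∈ Icc (0:ℝ) T, |u t| ≤ C := fun t ht => (hC₀ t ht).trans (le_max_left _ _)
  have hC0 : (0:ℝ) ≤ C := le_max_right _ _
  have hHcont : Continuous H := hH_C1.continuous
  have hHd : Differentiable ℝ H := hH_C1.differentiable one_ne_zero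
  obtain ⟨M, hM⟩ := (isCompact_Icc (a := -C) (b := C)).exists_bound_of_continuousOn
    hHcont.continuousOn
  -- truncated u
  set ub : ℝ → ℝ := indicator (Ioc 0 T) u with hub_def
  have hub_meas : Measurable ub := hu_meas.indicator measurableSet_Ioc
  have hub_mem : ∀ x, ub x ∈ Icc (-C) C := by
    intro x; by_cases hx : x ∈ Ioc (0:ℝ) T
    · rw [hub_def, indicator_of_mem hx]; exact abs_le.1 (hC x ⟨hx.1.le, hx.2⟩)
    · rw [hub_def, indicator_of_notMem hx]; exact ⟨by linarith, hC0⟩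
  have hub_bdd : ∀ x, |ub x| ≤ C := fun x => abs_le.2 ⟨(hub_mem x).1, (hub_mem x).2⟩
  have hHub_bdd : ∀ x, |H (ub x)| ≤ M := fun x => by
    have := hM (ub x) (hub_mem x); rwa [Real.norm_eq_abs] at this
  -- the two truncated data functions
  set v1 : ℝ → ℝ := indicator (Ioc 0 T) (fun τ => u τ - u0) with hv1_def
  set v2 : ℝ → ℝ := indicator (Ioc 0 T) (fun τ => H (u τ) - H u0) with hv2_def
  have hv1_meas : Measurable v1 :=
    (hu_meas.sub measurable_const).indicator measurableSet_Ioc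
  have hv2_meas : Measurable v2 :=
    ((hHcont.measurable.comp hu_meas).sub measurable_const).indicator measurableSet_Ioc
  have hv1_bdd : ∀ x, |v1 x| ≤ C + |u0| := by
    intro x; by_cases hx : x ∈ Ioc (0:ℝ) T
    · rw [hv1_def, indicator_of_mem hx]
      calc |u x - u0| ≤ |u x| + |u0| := abs_sub _ _
      _ ≤ C + |u0| := by linarith [hC x ⟨hx.1.le, hx.2⟩]
    · rw [hv1_def, indicator_of_notMem hx]; simp; positivity
  have hv2_bdd : ∀ x, |v2 x| ≤ M + |H u0| := by
    have hM0 : (0:ℝ) ≤ M := le_trans (norm_nonneg _) (hM 0 ⟨by linarith, hC0⟩)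
    intro x; by_cases hx : x ∈ Ioc (0:ℝ) T
    · rw [hv2_def, indicator_of_mem hx]
      have h1 : |H (u x)| ≤ M := by
        have := hM (u x) (abs_le.1 (hC x ⟨hx.1.le, hx.2⟩))
        rwa [Real.norm_eq_abs] at this
      calc |H (u x) - H u0| ≤ |H (u x)| + |H u0| := abs_sub _ _
      _ ≤ M + |H u0| := by linarith
    · rw [hv2_def, indicator_of_notMem hx]; simp; positivity
  have hv1_supp : ∀ x, x ∉ Ioc (0:ℝ) T → v1 x = 0 := fun x hx => indicator_of_notMem hx _
  have hv2_supp : ∀ x, x ∉ Ioc (0:ℝ) T → v2 x = 0 := fun x hx => indicator_of_notMem hx _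
  have hd1 := conv_rep hT hh'_int hh_W11 v1 hv1_meas _ hv1_bdd hv1_supp
  have hd2 := conv_rep hT hh'_int hh_W11 v2 hv2_meas _ hv2_bdd hv2_supp
  -- truncated h'
  set f : ℝ → ℝ := indicator (Ioc 0 T) h' with hf_def
  have hf : Integrable f := by
    rw [hf_def, integrable_indicator_iff measurableSet_Ioc]; exact hh'_int
  -- h' (truncated) is a.e. nonpositive
  have hh'_nonpos : ∀ᵐ s : ℝ ∂(volume : Measure ℝ), s ∈ Ioo 0 T → f s ≤ 0 := by
    filter_upwards [ae_ftc f hf] with s hds hs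
    have hanti : AntitoneOn (fun x : ℝ => ∫ r in (0:ℝ)..x, f r) (Icc 0 T) := by
      intro a ha b hb hab
      show (∫ r in (0:ℝ)..b, f r) ≤ ∫ r in (0:ℝ)..a, f r
      rw [show (∫ r in (0:ℝ)..a, f r) = h a - h 0 from primitive_indicator_eq hh_W11 ha,
        show (∫ r in (0:ℝ)..b, f r) = h b - h 0 from primitive_indicator_eq hh_W11 hb]
      have := hh_anti ha hb hab; linarith
    have hslope : Tendsto (slope (fun x : ℝ => ∫ r in (0:ℝ)..x, f r) s) (𝓝[>] s) (𝓝 (f s)) :=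
      (hasDerivAt_iff_tendsto_slope.1 hds).mono_left
        (nhdsWithin_mono _ (fun y hy => ne_of_gt hy))
    refine le_of_tendsto hslope ?_
    filter_upwards [Ioo_mem_nhdsGT_of_mem ⟨le_refl s, hs.2⟩] with y hy
    rw [slope_def_field]
    apply div_nonpos_of_nonpos_of_nonneg
    · have := hanti ⟨hs.1.le, hs.2.le⟩
        (⟨by linarith [hy.1, hs.1], hy.2.le⟩ : y ∈ Icc (0:ℝ) T) hy.1.le
      linarith
    · linarith [hy.1]
  -- main part
  filter_upwards [hd1, hd2, ae_restrict_mem measurableSet_Ioo] with t hd1t hd2t ht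
  have htIcc : t ∈ Icc (0:ℝ) T := ⟨ht.1.le, ht.2.le⟩
  have htIoc : t ∈ Ioc (0:ℝ) T := ⟨ht.1, ht.2.le⟩
  -- rewrite the derivatives in the goal
  have hF2 : deriv (fun s : ℝ => ∫ τ in (0:ℝ)..s, h (s - τ) * (H (u τ) - H u0)) t
      = h 0 * v2 t + ∫ τ in (0:ℝ)..t, h' (t - τ) * v2 τ := by
    have hev : (fun s : ℝ => ∫ τ in (0:ℝ)..s, h (s - τ) * (H (u τ) - H u0)) =ᶠ[nhds t]
        (fun s : ℝ => ∫ τ in (0:ℝ)..s, h (s - τ) * v2 τ) := by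
      filter_upwards [Ioo_mem_nhds ht.1 ht.2] with s hs
      rw [intervalIntegral.integral_of_le hs.1.le, intervalIntegral.integral_of_le hs.1.le]
      refine setIntegral_congr_fun measurableSet_Ioc (fun τ hτ => ?_)
      rw [hv2_def, indicator_of_mem (Ioc_subset_Ioc_right hs.2.le hτ)]
    rw [hev.deriv_eq, hd2t.deriv]
  have hF1 : deriv (fun s : ℝ => ∫ τ in (0:ℝ)..s, h (s - τ) * (u τ - u0)) t
      = h 0 * v1 t + ∫ τ in (0:ℝ)..t, h' (t - τ) * v1 τ := by
    have hev : (fun s : ℝ => ∫ τ in (0:ℝ)..s, h (s - τ) * (u τ - u0)) =ᶠ[nhds t]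
        (fun s : ℝ => ∫ τ in (0:ℝ)..s, h (s - τ) * v1 τ) := by
      filter_upwards [Ioo_mem_nhds ht.1 ht.2] with s hs
      rw [intervalIntegral.integral_of_le hs.1.le, intervalIntegral.integral_of_le hs.1.le]
      refine setIntegral_congr_fun measurableSet_Ioc (fun τ hτ => ?_)
      rw [hv1_def, indicator_of_mem (Ioc_subset_Ioc_right hs.2.le hτ)]
    rw [hev.deriv_eq, hd1t.deriv]
  rw [hF1, hF2]
  -- integrability of the various products
  have hk_int : IntegrableOn (fun τ => f (t - τ)) (Ioc 0 t) volume :=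
    ((integrable_comp_sub_left f t).2 hf).integrableOn
  have hbm : ∀ X : ℝ → ℝ, Measurable X → ∀ B : ℝ, (∀ x, |X x| ≤ B) →
      IntegrableOn (fun τ => X τ * f (t - τ)) (Ioc 0 t) volume := by
    intro X hXm B hB
    exact Integrable.bdd_mul hk_int (hXm.aestronglyMeasurable.restrict)
      (ae_of_all _ fun τ => by simpa [Real.norm_eq_abs] using hB τ)
  have hIu : IntegrableOn (fun τ => ub τ * f (t - τ)) (Ioc 0 t) volume :=
    hbm ub hub_meas C hub_bdd
  have hIH : IntegrableOn (fun τ => H (ub τ) * f (t - τ)) (Ioc 0 t) volume :=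
    hbm (fun x => H (ub x)) (hHcont.measurable.comp hub_meas) M hHub_bdd
  -- named integrals
  set I1 : ℝ := ∫ τ in Ioc (0:ℝ) t, f (t - τ) with hI1_def
  set Ju : ℝ := ∫ τ in Ioc (0:ℝ) t, ub τ * f (t - τ) with hJu_def
  set JH : ℝ := ∫ τ in Ioc (0:ℝ) t, H (ub τ) * f (t - τ) with hJH_def
  -- h t = h 0 + I1
  have hne : ∀ᵐ τ : ℝ ∂(volume : Measure ℝ), τ ≠ t := by
    rw [ae_iff]
    have : {τ : ℝ | ¬τ ≠ t} = {t} := by ext τ; simp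
    rw [this]; exact measure_singleton t
  have hht : h t = h 0 + I1 := by
    rw [hh_W11 t htIcc]
    congr 1
    have e1 : (∫ s in (0:ℝ)..t, h' s) = ∫ s in (0:ℝ)..t, f s := by
      rw [intervalIntegral.integral_of_le ht.1.le, intervalIntegral.integral_of_le ht.1.le]
      refine setIntegral_congr_fun measurableSet_Ioc (fun s hs => ?_)
      exact (indicator_of_mem (Ioc_subset_Ioc_right ht.2.le hs) h').symm
    have e2 : (∫ τ in (0:ℝ)..t, f (t - τ)) = ∫ s in (0:ℝ)..t, f s := by
      rw [intervalIntegral.integral_comp_sub_left f t]; simp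
    rw [e1, ← e2, hI1_def, intervalIntegral.integral_of_le ht.1.le]
  -- conversion of the goal integrals
  have hconv : ∀ X : ℝ → ℝ, (∀ x, x ∉ Ioc (0:ℝ) T → X x = 0) →
      (∫ τ in (0:ℝ)..t, h' (t - τ) * X τ) = ∫ τ in Ioc (0:ℝ) t, X τ * f (t - τ) := by
    intro X _
    rw [intervalIntegral.integral_of_le ht.1.le]
    refine setIntegral_congr_ae measurableSet_Ioc ?_
    filter_upwards [hne] with τ hτne hτ
    have hmem : t - τ ∈ Ioc (0:ℝ) T :=
      ⟨sub_pos.2 (lt_of_le_of_ne hτ.2 hτne), by linarith [hτ.1, ht.2]⟩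
    rw [hf_def, indicator_of_mem hmem]; ring
  have hJ2 : (∫ τ in (0:ℝ)..t, h' (t - τ) * v2 τ) = JH - H u0 * I1 := by
    rw [hconv v2 hv2_supp]
    have hcg : ∀ τ ∈ Ioc (0:ℝ) t,
        v2 τ * f (t - τ) = H (ub τ) * f (t - τ) - H u0 * f (t - τ) := by
      intro τ hτ
      have hτT : τ ∈ Ioc (0:ℝ) T := Ioc_subset_Ioc_right ht.2.le hτ
      rw [hv2_def, indicator_of_mem hτT, hub_def, indicator_of_mem hτT]; ring
    rw [setIntegral_congr_fun measurableSet_Ioc hcg,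
      integral_sub hIH (hk_int.const_mul (H u0)), integral_const_mul]
  have hJ1 : (∫ τ in (0:ℝ)..t, h' (t - τ) * v1 τ) = Ju - u0 * I1 := by
    rw [hconv v1 hv1_supp]
    have hcg : ∀ τ ∈ Ioc (0:ℝ) t,
        v1 τ * f (t - τ) = ub τ * f (t - τ) - u0 * f (t - τ) := by
      intro τ hτ
      have hτT : τ ∈ Ioc (0:ℝ) T := Ioc_subset_Ioc_right ht.2.le hτ
      rw [hv1_def, indicator_of_mem hτT, hub_def, indicator_of_mem hτT]; ring
    rw [setIntegral_congr_fun measurableSet_Ioc hcg,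
      integral_sub hIu (hk_int.const_mul u0), integral_const_mul]
  have hv1t : v1 t = u t - u0 := by rw [hv1_def, indicator_of_mem htIoc]
  have hv2t : v2 t = H (u t) - H u0 := by rw [hv2_def, indicator_of_mem htIoc]
  -- convexity: tangent line inequality
  have hP : ∀ y, 0 ≤ H y - H (u t) - deriv H (u t) * (y - u t) := fun y => by
    have := convex_tangent hH_conv hHd (u t) y; linarith
  -- a.e. nonpositivity of the kernel
  have hkneg : ∀ᵐ τ ∂(volume.restrict (Ioc 0 t)), f (t - τ) ≤ 0 := by
    have hq := (quasiMeasurePreserving_sub_left_of_right_invariant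
      (volume : Measure ℝ) t).ae hh'_nonpos
    filter_upwards [ae_restrict_of_ae hq, ae_restrict_of_ae hne,
      ae_restrict_mem measurableSet_Ioc] with τ hτq hτne hτmem
    exact hτq ⟨sub_pos.2 (lt_of_le_of_ne hτmem.2 hτne), by linarith [hτmem.1, ht.2]⟩
  have hkey : 0 ≤ (H u0 - H (u t) - deriv H (u t) * (u0 - u t)) * h t
      + ∫ τ in Ioc (0:ℝ) t,
          (-(f (t - τ))) * (H (ub τ) - H (u t) - deriv H (u t) * (ub τ - u t)) := by
    have h1 : 0 ≤ ∫ τ in Ioc (0:ℝ) t,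
        (-(f (t - τ))) * (H (ub τ) - H (u t) - deriv H (u t) * (ub τ - u t)) := by
      refine setIntegral_nonneg_of_ae_restrict ?_
      filter_upwards [hkneg] with τ hτ
      exact mul_nonneg (neg_nonneg.2 hτ) (hP _)
    have h2 : 0 ≤ (H u0 - H (u t) - deriv H (u t) * (u0 - u t)) * h t :=
      mul_nonneg (hP u0) (hh_nonneg t htIcc)
    linarith
  have hsplit : (∫ τ in Ioc (0:ℝ) t,
        (-(f (t - τ))) * (H (ub τ) - H (u t) - deriv H (u t) * (ub τ - u t)))
      = (H (u t) - deriv H (u t) * u t) * I1 + deriv H (u t) * Ju - JH := by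
    have hcg : ∀ τ ∈ Ioc (0:ℝ) t,
        (-(f (t - τ))) * (H (ub τ) - H (u t) - deriv H (u t) * (ub τ - u t))
        = ((H (u t) - deriv H (u t) * u t) * f (t - τ)
            + deriv H (u t) * (ub τ * f (t - τ))) - H (ub τ) * f (t - τ) :=
      fun τ _ => by ring
    have hA : IntegrableOn (fun τ => (H (u t) - deriv H (u t) * u t) * f (t - τ)
        + deriv H (u t) * (ub τ * f (t - τ))) (Ioc 0 t) volume := by
      exact (hk_int.const_mul _).add (hIu.const_mul _)
    have hB : IntegrableOn (fun τ => (H (u t) - deriv H (u t) * u t) * f (t - τ))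
        (Ioc 0 t) volume := hk_int.const_mul _
    have hB' : IntegrableOn (fun τ => deriv H (u t) * (ub τ * f (t - τ)))
        (Ioc 0 t) volume := hIu.const_mul _
    rw [setIntegral_congr_fun measurableSet_Ioc hcg,
      integral_sub hA hIH, integral_add hB hB',
      integral_const_mul, integral_const_mul]
  rw [hsplit] at hkey
  rw [hJ1, hJ2, hv1t, hv2t]
  have hh0 : h 0 = h t - I1 := by linarith
  have hEq : (H u0 - H (u t) - deriv H (u t) * (u0 - u t)) * h t
      + ((H (u t) - deriv H (u t) * u t) * I1 + deriv H (u t) * Ju - JH)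
      = deriv H (u t) * (h 0 * (u t - u0) + (Ju - u0 * I1))
        - (h 0 * (H (u t) - H u0) + (JH - H u0 * I1)) := by
    rw [hh0]; ring
  linarith
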